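/- Let G be a graph with γ_R(G) = 2β(G) that is vertex Roman domination-critical, i.e., γ_R(G − x) < γ_R(G) for every vertex x. Then b_R(G) ≥ δ(G) + 1. -/

import Mathlib

open SimpleGraph Finset

/-- A Roman dominating function: values in {0,1,2}, every 0-vertex has a neighbor with value 2. -/
def IsRDF {V : Type*} (G : SimpleGraph V) (f : V → ℕ) : Prop :=
  (∀ v, f v ≤ 2) ∧ ∀ v, f v = 0 → ∃ u, G.Adj v u ∧ f u = 2

/-- The Roman domination number: minimum weight of a Roman dominating function. -/
noncomputable def romanDom {V : Type*} [Fintype V] (G : SimpleGraph V) : ℕ :=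
  sInf {k | ∃ f : V → ℕ, IsRDF G f ∧ ∑ v, f v = k}

/-- A dominating set. -/
def IsDomSet {V : Type*} (G : SimpleGraph V) (S : Set V) : Prop :=
  ∀ v, v ∈ S ∨ ∃ u ∈ S, G.Adj u v

/-- The domination number. -/
noncomputable def domNum {V : Type*} [Fintype V] (G : SimpleGraph V) : ℕ :=
  sInf {k | ∃ S : Set V, IsDomSet G S ∧ S.ncard = k}

/-- Degree of a vertex. -/
noncomputable def deg {V : Type*} (G : SimpleGraph V) (v : V) : ℕ :=
  (G.neighborSet v).ncard

/-- Maximum degree. -/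
noncomputable def maxDeg {V : Type*} (G : SimpleGraph V) : ℕ :=
  sSup {d | ∃ v, deg G v = d}

/-- Minimum degree. -/
noncomputable def minDeg {V : Type*} (G : SimpleGraph V) : ℕ :=
  sInf {d | ∃ v, deg G v = d}

/-- The Roman bondage number: minimum size of an edge set whose deletion increases `romanDom`. -/
noncomputable def romanBondage {V : Type*} [Fintype V] (G : SimpleGraph V) : ℕ :=
  sInf {k | ∃ B : Set (Sym2 V), B ⊆ G.edgeSet ∧
    romanDom (G.deleteEdges B) > romanDom G ∧ B.ncard = k}

/-- The bondage number: minimum size of an edge set whose deletion increases `domNum`. -/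
noncomputable def bondage {V : Type*} [Fintype V] (G : SimpleGraph V) : ℕ :=
  sInf {k | ∃ B : Set (Sym2 V), B ⊆ G.edgeSet ∧
    domNum (G.deleteEdges B) > domNum G ∧ B.ncard = k}

/-- A vertex cover. -/
def IsVC {V : Type*} (G : SimpleGraph V) (S : Set V) : Prop :=
  ∀ u v, G.Adj u v → u ∈ S ∨ v ∈ S

/-- The vertex covering number. -/
noncomputable def vcNum {V : Type*} [Fintype V] (G : SimpleGraph V) : ℕ :=
  sInf {k | ∃ S : Set V, IsVC G S ∧ S.ncard = k}


/-! If an edge set `B` with `|B| ≤ δ(G)` left `G - B` without isolated vertices, a minimum vertex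
cover `S` of `G` would still cover `G - B`, and `2·1_S` would be a Roman dominating function of
`G - B` of weight `2β(G) = γ_R(G)`. Otherwise `G - B` has an isolated vertex `v`; as
`|B| ≤ δ(G) ≤ deg v`, the set `B` is exactly the star at `v`, so `G - B - v = G - v`, and
extending a minimum Roman dominating function of `G - v` by `1` at `v` gives
`γ_R(G - B) ≤ γ_R(G - v) + 1 ≤ γ_R(G)` by criticality. Hence no set of at most `δ(G)` edges raises
`γ_R`. A vertex of degree at least `2` gives `γ_R(G) < |V| = γ_R(G - E(G))`, so some edge set does
raise `γ_R` and `b_R(G)` is not the junk value `sInf ∅ = 0`. -/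

section Basic

variable {V : Type*}

lemma isRDF_one (G : SimpleGraph V) : IsRDF G (fun _ => 1) :=
  ⟨fun _ => one_le_two, fun _ h => absurd h one_ne_zero⟩

lemma IsVC.mono {G H : SimpleGraph V} {S : Set V} (hGH : H ≤ G) (hS : IsVC G S) : IsVC H S :=
  fun u v huv => hS u v (hGH huv)

lemma minDeg_le_deg (G : SimpleGraph V) (v : V) : minDeg G ≤ deg G v :=
  Nat.sInf_le ⟨v, rfl⟩

lemma ncard_incidenceSet (G : SimpleGraph V) (v : V) : (G.incidenceSet v).ncard = deg G v := by
  classical exact Set.ncard_congr' (G.incidenceSetEquivNeighborSet v)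

lemma exists_two_le_deg {G : SimpleGraph V} (h : 2 ≤ maxDeg G) : ∃ v, 2 ≤ deg G v := by
  by_contra! hlt
  have : maxDeg G ≤ 1 := csSup_le' (by rintro _ ⟨v, rfl⟩; exact Nat.le_of_lt_succ (hlt v))
  omega

lemma incidenceSet_subset_of_forall_not_adj_deleteEdges {G : SimpleGraph V} {B : Set (Sym2 V)}
    {v : V} (hv : ∀ u, ¬ (G.deleteEdges B).Adj v u) : G.incidenceSet v ⊆ B := by
  rintro e ⟨he, hve⟩
  obtain ⟨u, rfl⟩ := Sym2.mem_iff_exists.mp hve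
  by_contra hu
  exact hv u (deleteEdges_adj.mpr ⟨he, hu⟩)

lemma induce_deleteEdges_eq_of_forall_mem {G : SimpleGraph V} {B : Set (Sym2 V)} {v : V}
    (hB : ∀ e ∈ B, v ∈ e) : (G.deleteEdges B).induce {y | y ≠ v} = G.induce {y | y ≠ v} := by
  ext u w
  simp only [comap_adj, Function.Embedding.subtype_apply, deleteEdges_adj, and_iff_left_iff_imp]
  intro _ huw
  rcases Sym2.mem_iff.mp (hB _ huw) with h | h
  exacts [u.prop h.symm, w.prop h.symm]

end Basic

section Finite

variable {V : Type*} [Fintype V]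

lemma deg_eq_degree (G : SimpleGraph V) [DecidableRel G.Adj] (v : V) : deg G v = G.degree v := by
  rw [deg, Set.ncard_eq_toFinset_card', Set.toFinset_card, card_neighborSet_eq_degree]

lemma romanDom_le_sum {G : SimpleGraph V} {f : V → ℕ} (hf : IsRDF G f) :
    romanDom G ≤ ∑ v, f v :=
  Nat.sInf_le ⟨f, hf, rfl⟩

lemma exists_isRDF_sum_eq_romanDom (G : SimpleGraph V) :
    ∃ f : V → ℕ, IsRDF G f ∧ ∑ v, f v = romanDom G :=
  Nat.sInf_mem (s := {k | ∃ f : V → ℕ, IsRDF G f ∧ ∑ v, f v = k}) ⟨_, _, isRDF_one G, rfl⟩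

lemma exists_isVC_ncard_eq_vcNum (G : SimpleGraph V) :
    ∃ S : Set V, IsVC G S ∧ S.ncard = vcNum G :=
  Nat.sInf_mem (s := {k | ∃ S : Set V, IsVC G S ∧ S.ncard = k})
    ⟨_, Set.univ, fun _ _ _ => Or.inl trivial, rfl⟩

lemma vcNum_mono {G H : SimpleGraph V} (hGH : H ≤ G) : vcNum H ≤ vcNum G := by
  obtain ⟨S, hS, hcard⟩ := exists_isVC_ncard_eq_vcNum G
  exact hcard ▸ Nat.sInf_le ⟨S, hS.mono hGH, rfl⟩

lemma romanDom_le_two_mul_vcNum {G : SimpleGraph V} (hG : ∀ v, ∃ u, G.Adj v u) :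
    romanDom G ≤ 2 * vcNum G := by
  classical
  obtain ⟨S, hS, hcard⟩ := exists_isVC_ncard_eq_vcNum G
  let f : V → ℕ := fun u => if u ∈ S then 2 else 0
  have hf : IsRDF G f := by
    refine ⟨fun u => by unfold f; split_ifs <;> omega, fun u hu => ?_⟩
    have huS : u ∉ S := fun h => by simp [f, h] at hu
    obtain ⟨w, hw⟩ := hG u
    exact ⟨w, hw, if_pos ((hS u w hw).resolve_left huS)⟩
  calc romanDom G ≤ ∑ u, f u := romanDom_le_sum hf
    _ = 2 * vcNum G := by
      simp [f, Finset.sum_ite, ← hcard, Set.ncard_eq_toFinset_card', mul_comm]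

lemma romanDom_le_romanDom_induce_add_one [DecidableEq V] (G : SimpleGraph V) (v : V) :
    romanDom G ≤ romanDom (G.induce {y | y ≠ v}) + 1 := by
  obtain ⟨g, hg, hgsum⟩ := exists_isRDF_sum_eq_romanDom (G.induce {y | y ≠ v})
  let f : V → ℕ := fun u => if h : u = v then 1 else g ⟨u, h⟩
  have hf : IsRDF G f := by
    refine ⟨fun u => ?_, fun u hu => ?_⟩
    · by_cases h : u = v
      · simp [f, h]
      · simpa [f, h] using hg.1 ⟨u, h⟩
    · have h : u ≠ v := fun h => by simp [f, h] at hu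
      obtain ⟨w, hw, hw2⟩ := hg.2 ⟨u, h⟩ (by simpa [f, h] using hu)
      have hwv : (w : V) ≠ v := w.prop
      exact ⟨w, hw, by simpa [f, hwv] using hw2⟩
  have hsum : ∑ u, f u = romanDom (G.induce {y | y ≠ v}) + 1 := by
    rw [Fintype.sum_eq_add_sum_subtype_ne f v, ← hgsum, add_comm]
    exact congrArg₂ (· + ·) (Finset.sum_congr rfl fun u _ => dif_neg u.prop) (dif_pos rfl)
  exact hsum ▸ romanDom_le_sum hf

lemma romanDom_bot : romanDom (⊥ : SimpleGraph V) = Fintype.card V := by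
  obtain ⟨f, hf, hsum⟩ := exists_isRDF_sum_eq_romanDom (⊥ : SimpleGraph V)
  have hpos : ∀ u, 1 ≤ f u := fun u => Nat.one_le_iff_ne_zero.mpr fun h0 => by
    obtain ⟨_, hadj, -⟩ := hf.2 u h0
    exact hadj
  refine le_antisymm (by simpa using romanDom_le_sum (isRDF_one ⊥)) ?_
  calc Fintype.card V = ∑ _u : V, 1 := by simp
    _ ≤ ∑ u, f u := Finset.sum_le_sum fun u _ => hpos u
    _ = _ := hsum

lemma romanDom_add_deg_le (G : SimpleGraph V) (v : V) :
    romanDom G + deg G v ≤ Fintype.card V + 1 := by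
  classical
  let f : V → ℕ := fun u => if u = v then 2 else if G.Adj v u then 0 else 1
  have hf : IsRDF G f := by
    refine ⟨fun u => by unfold f; split_ifs <;> omega, fun u hu => ⟨v, ?_, if_pos rfl⟩⟩
    unfold f at hu
    split_ifs at hu with h₁ h₂
    exact h₂.symm
  have hpoint : ∀ u, f u + (if G.Adj v u then 1 else 0) = 1 + (if u = v then 1 else 0) := by
    intro u
    by_cases h₁ : u = v
    · subst h₁; simp [f]
    · by_cases h₂ : G.Adj v u <;> simp [f, h₁, h₂]
  have hsum : ∑ u, f u + deg G v = Fintype.card V + 1 := by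
    have := Finset.sum_congr rfl fun u (_ : u ∈ Finset.univ) => hpoint u
    simpa [Finset.sum_add_distrib, Finset.sum_boole, deg_eq_degree,
      ← card_neighborFinset_eq_degree, neighborFinset_eq_filter] using this
  have := romanDom_le_sum hf
  omega

lemma romanDom_lt_card {G : SimpleGraph V} (hG : 2 ≤ maxDeg G) : romanDom G < Fintype.card V := by
  obtain ⟨v, hv⟩ := exists_two_le_deg hG
  have := romanDom_add_deg_le G v
  omega

lemma exists_romanBondage_eq {G : SimpleGraph V}
    (h : romanDom G < romanDom (G.deleteEdges G.edgeSet)) :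
    ∃ B : Set (Sym2 V), B ⊆ G.edgeSet ∧ romanDom G < romanDom (G.deleteEdges B) ∧
      B.ncard = romanBondage G :=
  Nat.sInf_mem (s := {k | ∃ B : Set (Sym2 V), B ⊆ G.edgeSet ∧
    romanDom (G.deleteEdges B) > romanDom G ∧ B.ncard = k}) ⟨_, _, subset_rfl, h, rfl⟩

lemma romanDom_lt_romanDom_deleteEdges_edgeSet {G : SimpleGraph V} (hG : 2 ≤ maxDeg G) :
    romanDom G < romanDom (G.deleteEdges G.edgeSet) := by
  rw [deleteEdges_edgeSet, sdiff_self, romanDom_bot]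
  exact romanDom_lt_card hG

end Finite

section Critical

variable {V : Type*} [Fintype V] [DecidableEq V] {G : SimpleGraph V}

lemma romanDom_deleteEdges_le_of_forall_not_adj {B : Set (Sym2 V)} {v : V}
    (hcrit : romanDom (G.induce {y | y ≠ v}) < romanDom G) (hB : B.ncard ≤ minDeg G)
    (hiso : ∀ u, ¬ (G.deleteEdges B).Adj v u) :
    romanDom (G.deleteEdges B) ≤ romanDom G := by
  have hstar : G.incidenceSet v = B :=
    Set.eq_of_subset_of_ncard_le (incidenceSet_subset_of_forall_not_adj_deleteEdges hiso)
      (by rw [ncard_incidenceSet]; exact hB.trans (minDeg_le_deg G v)) (Set.toFinite _)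
  have hBv : ∀ e ∈ B, v ∈ e := fun e he => (hstar ▸ he).2
  calc romanDom (G.deleteEdges B)
      ≤ romanDom ((G.deleteEdges B).induce {y | y ≠ v}) + 1 :=
        romanDom_le_romanDom_induce_add_one _ v
    _ = romanDom (G.induce {y | y ≠ v}) + 1 := by rw [induce_deleteEdges_eq_of_forall_mem hBv]
    _ ≤ romanDom G := hcrit

lemma romanDom_deleteEdges_le (hβ : romanDom G = 2 * vcNum G)
    (hvrc : ∀ x : V, romanDom (G.induce {y | y ≠ x}) < romanDom G)
    {B : Set (Sym2 V)} (hB : B.ncard ≤ minDeg G) :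
    romanDom (G.deleteEdges B) ≤ romanDom G := by
  by_cases hiso : ∃ v, ∀ u, ¬ (G.deleteEdges B).Adj v u
  · obtain ⟨v, hv⟩ := hiso
    exact romanDom_deleteEdges_le_of_forall_not_adj (hvrc v) hB hv
  · push Not at hiso
    calc romanDom (G.deleteEdges B) ≤ 2 * vcNum (G.deleteEdges B) :=
          romanDom_le_two_mul_vcNum hiso
      _ ≤ 2 * vcNum G := Nat.mul_le_mul_left 2 (vcNum_mono (deleteEdges_le B))
      _ = romanDom G := hβ.symm

end Critical

theorem stmt15 {V : Type*} [Fintype V] [DecidableEq V] (G : SimpleGraph V)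
    (hΔ : 2 ≤ maxDeg G) (hβ : romanDom G = 2 * vcNum G)
    (hvrc : ∀ x : V, romanDom (G.induce {y | y ≠ x}) < romanDom G) :
    minDeg G + 1 ≤ romanBondage G := by
  obtain ⟨B, -, hB, hcard⟩ := exists_romanBondage_eq (romanDom_lt_romanDom_deleteEdges_edgeSet hΔ)
  by_contra! h
  exact (romanDom_deleteEdges_le hβ hvrc (by omega : B.ncard ≤ minDeg G)).not_gt hB
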